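/- Let m* > 0 and consider the two-qubit Pauli channel T of the decoherence model with parameters m1* = m2* = 2m*, i.e., T(ρ) := Σ_{P,Q ∈ {I,X,Y,Z}} p_P · p_Q · (P⊗Q) ρ (P⊗Q) with pI = (1 + e^{−1/(2m*)})/2 − (1 − e^{−1/(2m*)})/4, pX = pY = (1 − e^{−1/(2m*)})/4, pZ = (1 − e^{−1/(2m*)})/2 − (1 − e^{−1/(2m*)})/4. Then for every m ≥ 1, T^{∘m}(Φ⁺) = f(m)·Φ⁺ + ((1 − f(m))/3)·(Φ⁻ + Ψ⁺ + Ψ⁻), where f(m) := (1/4)·(1 + 3·e^{−m/m*}); that is, the decohered state is an isotropic state of fidelity f(m). -/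
import Mathlib

open Matrix Kronecker

noncomputable section

/-- The four single-qubit Pauli matrices `I, X, Y, Z`. -/
def pauli : Fin 4 → Matrix (Fin 2) (Fin 2) ℂ
  | 0 => 1
  | 1 => !![0, 1; 1, 0]
  | 2 => !![0, -Complex.I; Complex.I, 0]
  | 3 => !![1, 0; 0, -1]

/-- The probabilities `pI, pX, pY, pZ` of the Pauli decoherence model with
parameters `m1* = m1` and `m2* = m2`. -/
def pauliProb (m1 m2 : ℝ) : Fin 4 → ℝ
  | 0 => (1 + Real.exp (-1 / m2)) / 2 - (1 - Real.exp (-1 / m1)) / 4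
  | 1 => (1 - Real.exp (-1 / m1)) / 4
  | 2 => (1 - Real.exp (-1 / m1)) / 4
  | 3 => (1 - Real.exp (-1 / m2)) / 2 - (1 - Real.exp (-1 / m1)) / 4

/-- The two-qubit Pauli channel `ρ ↦ Σ_{P,Q} p_P p_Q (P⊗Q) ρ (P⊗Q)`. -/
def pauliChannel (m1 m2 : ℝ) (ρ : Matrix (Fin 2 × Fin 2) (Fin 2 × Fin 2) ℂ) :
    Matrix (Fin 2 × Fin 2) (Fin 2 × Fin 2) ℂ :=
  ∑ i : Fin 4, ∑ j : Fin 4,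
    ((pauliProb m1 m2 i * pauliProb m1 m2 j : ℝ) : ℂ) •
      ((pauli i ⊗ₖ pauli j) * ρ * (pauli i ⊗ₖ pauli j))

/-- The Bell state vector `|Φ⁺⟩ = (|00⟩ + |11⟩)/√2`. -/
def phiPlusVec : Fin 2 × Fin 2 → ℂ := fun p =>
  ((if p = (0, 0) then 1 else 0) + (if p = (1, 1) then 1 else 0)) / (Real.sqrt 2 : ℂ)

/-- The Bell state vector `|Φ⁻⟩ = (|00⟩ − |11⟩)/√2`. -/
def phiMinusVec : Fin 2 × Fin 2 → ℂ := fun p =>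
  ((if p = (0, 0) then 1 else 0) - (if p = (1, 1) then 1 else 0)) / (Real.sqrt 2 : ℂ)

/-- The Bell state vector `|Ψ⁺⟩ = (|01⟩ + |10⟩)/√2`. -/
def psiPlusVec : Fin 2 × Fin 2 → ℂ := fun p =>
  ((if p = (0, 1) then 1 else 0) + (if p = (1, 0) then 1 else 0)) / (Real.sqrt 2 : ℂ)

/-- The Bell state vector `|Ψ⁻⟩ = (|01⟩ − |10⟩)/√2`. -/
def psiMinusVec : Fin 2 × Fin 2 → ℂ := fun p =>
  ((if p = (0, 1) then 1 else 0) - (if p = (1, 0) then 1 else 0)) / (Real.sqrt 2 : ℂ)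

/-- The rank-one projection `Φ⁺ = |Φ⁺⟩⟨Φ⁺|`. -/
def projPhiPlus : Matrix (Fin 2 × Fin 2) (Fin 2 × Fin 2) ℂ :=
  Matrix.vecMulVec phiPlusVec (star phiPlusVec)

/-- The rank-one projection `Φ⁻ = |Φ⁻⟩⟨Φ⁻|`. -/
def projPhiMinus : Matrix (Fin 2 × Fin 2) (Fin 2 × Fin 2) ℂ :=
  Matrix.vecMulVec phiMinusVec (star phiMinusVec)

/-- The rank-one projection `Ψ⁺ = |Ψ⁺⟩⟨Ψ⁺|`. -/
def projPsiPlus : Matrix (Fin 2 × Fin 2) (Fin 2 × Fin 2) ℂ :=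
  Matrix.vecMulVec psiPlusVec (star psiPlusVec)

/-- The rank-one projection `Ψ⁻ = |Ψ⁻⟩⟨Ψ⁻|`. -/
def projPsiMinus : Matrix (Fin 2 × Fin 2) (Fin 2 × Fin 2) ℂ :=
  Matrix.vecMulVec psiMinusVec (star psiMinusVec)

/-! ### Auxiliary definitions and lemmas -/

/-- The four Bell vectors indexed by `Fin 4`. -/
def bellVec : Fin 4 → (Fin 2 × Fin 2 → ℂ) :=
  ![phiPlusVec, phiMinusVec, psiPlusVec, psiMinusVec]

/-- The four Bell projections indexed by `Fin 4`. -/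
def bellProj : Fin 4 → Matrix (Fin 2 × Fin 2) (Fin 2 × Fin 2) ℂ :=
  ![projPhiPlus, projPhiMinus, projPsiPlus, projPsiMinus]

lemma bellProj_eq (k : Fin 4) :
    bellProj k = Matrix.vecMulVec (bellVec k) (star (bellVec k)) := by
  fin_cases k <;> rfl

/-- To which Bell projection `(P_i ⊗ P_j) Φ⁺ (P_i ⊗ P_j)` is mapped. -/
def tbl : Fin 4 → Fin 4 → Fin 4 :=
  ![![0, 2, 3, 1], ![2, 0, 1, 3], ![3, 1, 0, 2], ![1, 3, 2, 0]]

/-- The phase picked up by `|Φ⁺⟩` under `P_i ⊗ P_j`. -/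
def ph : Fin 4 → Fin 4 → ℂ :=
  ![![1, 1, Complex.I, 1], ![1, 1, -Complex.I, -1],
    ![-Complex.I, -Complex.I, -1, Complex.I], ![1, 1, Complex.I, 1]]

lemma pauli_sq (i : Fin 4) : pauli i * pauli i = 1 := by
  fin_cases i <;>
    simp [pauli, Matrix.mul_fin_two, Matrix.one_fin_two, Complex.I_mul_I]

lemma pauli_herm (i : Fin 4) : (pauli i)ᴴ = pauli i := by
  fin_cases i <;> ext a b <;> fin_cases a <;> fin_cases b <;>
    simp [pauli, Matrix.conjTranspose_apply]

lemma pk_herm (i j : Fin 4) : (pauli i ⊗ₖ pauli j)ᴴ = pauli i ⊗ₖ pauli j := by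
  ext ⟨a,b⟩ ⟨c,d⟩
  have h1 : ∀ (k : Fin 4) (a c : Fin 2), (starRingEnd ℂ) (pauli k c a) = pauli k a c := by
    intro k a c
    conv_rhs => rw [← pauli_herm k]
    simp [Matrix.conjTranspose_apply]
  simp [Matrix.conjTranspose_apply, Matrix.kroneckerMap_apply, h1]

lemma conj_vecMulVec {n : Type*} [Fintype n] (M : Matrix n n ℂ) (hM : Mᴴ = M) (v : n → ℂ) :
    M * Matrix.vecMulVec v (star v) * M = Matrix.vecMulVec (M *ᵥ v) (star (M *ᵥ v)) := by
  have h : star (M *ᵥ v) = star v ᵥ* M := by rw [Matrix.star_mulVec, hM]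
  rw [h]
  ext i j
  simp only [Matrix.mul_apply, Matrix.vecMulVec_apply, Matrix.mulVec, Matrix.vecMul,
    dotProduct, Finset.sum_mul]
  rw [Finset.sum_comm]
  refine Finset.sum_congr rfl fun x _ => ?_
  rw [Finset.mul_sum]
  exact Finset.sum_congr rfl fun y _ => by ring

set_option maxHeartbeats 1000000 in
lemma mulVec_phiPlus (i j : Fin 4) :
    (pauli i ⊗ₖ pauli j) *ᵥ phiPlusVec = ph i j • bellVec (tbl i j) := by
  fin_cases i <;> fin_cases j <;>
    · funext p
      fin_cases p <;>
        simp [Matrix.mulVec, dotProduct, Fintype.sum_prod_type, Fin.sum_univ_two,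
          Matrix.kroneckerMap_apply, pauli, phiPlusVec, phiMinusVec, psiPlusVec, psiMinusVec,
          bellVec, tbl, ph, Matrix.one_apply, Prod.ext_iff] <;>
        ring

lemma ph_unit (i j : Fin 4) : ph i j * star (ph i j) = 1 := by
  fin_cases i <;> fin_cases j <;> simp [ph, Complex.ext_iff]

lemma vecMulVec_smul_smul {n : Type*} (c d : ℂ) (v w : n → ℂ) :
    Matrix.vecMulVec (c • v) (d • w) = (c * d) • Matrix.vecMulVec v w := by
  ext i j
  simp [Matrix.vecMulVec_apply, mul_assoc, mul_left_comm, mul_comm]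

lemma conj_phiPlus (i j : Fin 4) :
    (pauli i ⊗ₖ pauli j) * projPhiPlus * (pauli i ⊗ₖ pauli j) = bellProj (tbl i j) := by
  rw [projPhiPlus, conj_vecMulVec _ (pk_herm i j), mulVec_phiPlus, bellProj_eq,
    star_smul, vecMulVec_smul_smul, ph_unit, one_smul]

lemma sum_bell : projPhiPlus + projPhiMinus + projPsiPlus + projPsiMinus = 1 := by
  have h2 : (Real.sqrt 2 : ℂ) ^ 2 = 2 := by
    rw [sq]
    norm_cast
    exact Real.mul_self_sqrt (by norm_num)
  ext ⟨a,b⟩ ⟨c,d⟩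
  fin_cases a <;> fin_cases b <;> fin_cases c <;> fin_cases d <;>
    simp [projPhiPlus, projPhiMinus, projPsiPlus, projPsiMinus, Matrix.vecMulVec_apply,
      phiPlusVec, phiMinusVec, psiPlusVec, psiMinusVec, Matrix.one_apply, Prod.ext_iff,
      div_mul_div_comm] <;>
    ring_nf <;> norm_num [h2]

lemma channel_smul_add (m1 m2 : ℝ) (a b : ℂ)
    (ρ σ : Matrix (Fin 2 × Fin 2) (Fin 2 × Fin 2) ℂ) :
    pauliChannel m1 m2 (a • ρ + b • σ) =
      a • pauliChannel m1 m2 ρ + b • pauliChannel m1 m2 σ := by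
  unfold pauliChannel
  rw [Finset.smul_sum, Finset.smul_sum, ← Finset.sum_add_distrib]
  refine Finset.sum_congr rfl fun i _ => ?_
  rw [Finset.smul_sum, Finset.smul_sum, ← Finset.sum_add_distrib]
  refine Finset.sum_congr rfl fun j _ => ?_
  rw [Matrix.mul_add, Matrix.add_mul, Matrix.mul_smul, Matrix.mul_smul,
    Matrix.smul_mul, Matrix.smul_mul, smul_add, smul_smul, smul_smul, smul_smul, smul_smul,
    mul_comm a, mul_comm b]

lemma channel_one (m1 m2 : ℝ) :
    pauliChannel m1 m2 (1 : Matrix (Fin 2 × Fin 2) (Fin 2 × Fin 2) ℂ) = 1 := by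
  unfold pauliChannel
  simp only [Matrix.mul_one, ← Matrix.mul_kronecker_mul, pauli_sq, Matrix.one_kronecker_one,
    ← Finset.sum_smul]
  rw [show (∑ i : Fin 4, ∑ j : Fin 4, ((pauliProb m1 m2 i * pauliProb m1 m2 j : ℝ) : ℂ)) = 1 by
    simp only [Fin.sum_univ_four, pauliProb]
    push_cast
    ring]
  exact one_smul _ _

lemma channel_phiPlus (mstar : ℝ) :
    pauliChannel (2 * mstar) (2 * mstar) projPhiPlus =
      (((1 + 3 * Real.exp (-1 / (2 * mstar)) ^ 2) / 4 : ℝ) : ℂ) • projPhiPlus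
      + (((1 - Real.exp (-1 / (2 * mstar)) ^ 2) / 4 : ℝ) : ℂ) •
          (projPhiMinus + projPsiPlus + projPsiMinus) := by
  unfold pauliChannel
  simp only [conj_phiPlus, Fin.sum_univ_four]
  norm_num [tbl, bellProj, pauliProb]
  push_cast
  module

lemma channel_phiPlus' (mstar : ℝ) :
    pauliChannel (2 * mstar) (2 * mstar) projPhiPlus =
      (((1 + 3 * Real.exp (-1 / (2 * mstar)) ^ 2) / 4 : ℝ) : ℂ) • projPhiPlus
      + (((1 - Real.exp (-1 / (2 * mstar)) ^ 2) / 4 : ℝ) : ℂ) • (1 - projPhiPlus) := by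
  have hb : (1 : Matrix (Fin 2 × Fin 2) (Fin 2 × Fin 2) ℂ) - projPhiPlus =
      projPhiMinus + projPsiPlus + projPsiMinus := by
    rw [← sum_bell]; abel
  rw [hb]
  exact channel_phiPlus mstar

/-- The iterate formula, for all `m : ℕ`. -/
lemma iter_formula (mstar : ℝ) (hmstar : mstar ≠ 0) (m : ℕ) :
    (pauliChannel (2 * mstar) (2 * mstar))^[m] projPhiPlus =
      ((((1 : ℝ)/4) * (1 + 3 * Real.exp (-(m : ℝ) / mstar)) : ℝ) : ℂ) • projPhiPlus
      + ((((1 - (1/4) * (1 + 3 * Real.exp (-(m : ℝ) / mstar))) / 3 : ℝ)) : ℂ) •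
          (1 - projPhiPlus) := by
  induction m with
  | zero =>
    norm_num
  | succ m ih =>
    rw [Function.iterate_succ_apply', ih, channel_smul_add]
    have hIT : pauliChannel (2 * mstar) (2 * mstar)
        ((1 : Matrix (Fin 2 × Fin 2) (Fin 2 × Fin 2) ℂ) - projPhiPlus) =
        (1 : Matrix (Fin 2 × Fin 2) (Fin 2 × Fin 2) ℂ)
          - ((((1 + 3 * Real.exp (-1 / (2 * mstar)) ^ 2) / 4 : ℝ) : ℂ) • projPhiPlus
          + (((1 - Real.exp (-1 / (2 * mstar)) ^ 2) / 4 : ℝ) : ℂ) • (1 - projPhiPlus)) := by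
      have h1 : (1 : Matrix (Fin 2 × Fin 2) (Fin 2 × Fin 2) ℂ) - projPhiPlus =
          (1 : ℂ) • (1 : Matrix (Fin 2 × Fin 2) (Fin 2 × Fin 2) ℂ) + (-1 : ℂ) • projPhiPlus := by
        module
      rw [h1, channel_smul_add, channel_one, channel_phiPlus']
      module
    rw [hIT, channel_phiPlus']
    have hc : ((m + 1 : ℕ) : ℝ) = (m : ℝ) + 1 := by push_cast; ring
    rw [hc]
    have key : Real.exp (-((m : ℝ) + 1) / mstar) =
        Real.exp (-(m : ℝ) / mstar) * Real.exp (-1 / (2 * mstar)) ^ 2 := by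
      rw [sq, ← Real.exp_add, ← Real.exp_add]
      congr 1
      field_simp
      ring
    rw [key]
    push_cast
    module

theorem stmt_14 (mstar : ℝ) (hmstar : 0 < mstar) (m : ℕ) (hm : 1 ≤ m) :
    (pauliChannel (2 * mstar) (2 * mstar))^[m] projPhiPlus =
      ((((1 : ℝ)/4) * (1 + 3 * Real.exp (-(m : ℝ) / mstar)) : ℝ) : ℂ) • projPhiPlus
      + ((((1 - (1/4) * (1 + 3 * Real.exp (-(m : ℝ) / mstar))) / 3 : ℝ)) : ℂ) •
          (projPhiMinus + projPsiPlus + projPsiMinus) := by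
  have hb : projPhiMinus + projPsiPlus + projPsiMinus =
      (1 : Matrix (Fin 2 × Fin 2) (Fin 2 × Fin 2) ℂ) - projPhiPlus := by
    rw [← sum_bell]; abel
  rw [hb]
  exact iter_formula mstar (ne_of_gt hmstar) m

end
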